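/- Let G be a graph with maximum degree ℓ. If the subgraph of G induced by the vertices of degree ℓ contains no cycle, then G has a proper edge-colouring with ℓ colours such that the sizes of any two colour classes differ by at most one. -/

import Mathlib

/-!
A minimal counterexample `G` to Fournier's theorem is edge-critical: for every edge `xy` the
graph `G - xy` has an `ℓ`-edge-colouring. Vizing's fan argument, completed by one Kempe-chain
swap in the subgraph of two colours `α, β` (a graph of maximum degree two, one component of
which contains at most two vertices missing `α` or `β`), then shows that `x` has a neighbour
`z ≠ y` of degree `ℓ`. So every vertex of degree `ℓ` has two neighbours of degree `ℓ`, and the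
subgraph induced by these vertices contains a cycle.

Among all `ℓ`-edge-colourings take one minimising `∑ γ, |E_γ|²`. If `|E_α| ≥ |E_β| + 2`, some
component of the `α`/`β`-subgraph has more `α`-edges than `β`-edges. A connected graph on `k`
vertices has at least `k - 1` edges, at most `k / 2` of which share a colour, so it has exactly
one more, and swapping `α` and `β` on it lowers the sum.
-/

open Finset

lemma Finset.sum_lt_sum_of_eq_off_pair {ι : Type*} [DecidableEq ι] {s : Finset ι}
    {f g : ι → ℕ} {a b : ι} (ha : a ∈ s) (hb : b ∈ s) (hab : a ≠ b)
    (heq : ∀ i ∈ s, i ≠ a → i ≠ b → f i = g i) (hlt : f a + f b < g a + g b) :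
    ∑ i ∈ s, f i < ∑ i ∈ s, g i := by
  have hb' : b ∈ s.erase a := mem_erase.2 ⟨hab.symm, hb⟩
  have hrest : ∑ i ∈ (s.erase a).erase b, f i = ∑ i ∈ (s.erase a).erase b, g i :=
    sum_congr rfl fun i hi => by
      obtain ⟨hib, hia, his⟩ : i ≠ b ∧ i ≠ a ∧ i ∈ s := by simpa using hi
      exact heq i his hia hib
  rw [← add_sum_erase s f ha, ← add_sum_erase s g ha, ← add_sum_erase _ f hb',
    ← add_sum_erase _ g hb']
  omega

namespace SimpleGraph

variable {V : Type*} {G : SimpleGraph V}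

section Degree

variable [Fintype V] [DecidableRel G.Adj]

lemma ncard_neighborSet_eq_degree (G : SimpleGraph V) [DecidableRel G.Adj] (v : V) :
    (G.neighborSet v).ncard = G.degree v := by
  rw [← card_neighborSet_eq_degree, Set.ncard_eq_toFinset_card', Set.toFinset_card]

lemma ConnectedComponent.degree_toSimpleGraph (K : G.ConnectedComponent) (v : K)
    [Fintype (K.toSimpleGraph.neighborSet v)] : K.toSimpleGraph.degree v = G.degree v := by
  classical
  convert degree_induce_of_neighborSet_subset fun _ hw => K.mem_supp_of_adj_mem_supp v.2 hw
  exacts [Iff.rfl, rfl]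

lemma ConnectedComponent.two_mul_card_supp_le [DecidableEq V] (K : G.ConnectedComponent) :
    2 * #K.supp.toFinset ≤ ∑ v ∈ K.supp.toFinset, G.degree v + 2 := by
  classical
  have hconn := K.connected_toSimpleGraph.card_vert_le_card_edgeSet_add_one
  have hsum := K.toSimpleGraph.sum_degrees_eq_twice_card_edges
  rw [Nat.card_eq_fintype_card, Nat.card_eq_fintype_card, ← edgeFinset_card] at hconn
  have hdeg : ∑ v : K, K.toSimpleGraph.degree v = ∑ v ∈ K.supp.toFinset, G.degree v := by
    rw [Finset.sum_subtype K.supp.toFinset (p := (· ∈ K)) (fun _ => Set.mem_toFinset)]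
    exact Finset.sum_congr rfl fun v _ => K.degree_toSimpleGraph v
  have hcard : #K.supp.toFinset = Fintype.card K := by
    rw [Set.toFinset_card]
    exact Fintype.card_congr (Equiv.refl _)
  omega

lemma ConnectedComponent.card_filter_degree_le_one_le_two [DecidableEq V]
    (K : G.ConnectedComponent) (hmax : ∀ v, G.degree v ≤ 2) :
    #{v ∈ K.supp.toFinset | G.degree v ≤ 1} ≤ 2 := by
  have hbound : ∑ v ∈ K.supp.toFinset, G.degree v + #{v ∈ K.supp.toFinset | G.degree v ≤ 1}
      ≤ 2 * #K.supp.toFinset := by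
    rw [card_filter, ← sum_add_distrib, mul_comm, ← smul_eq_mul, ← sum_const]
    exact sum_le_sum fun v _ => by have := hmax v; split_ifs <;> omega
  have := K.two_mul_card_supp_le
  omega

lemma Reachable.not_reachable_of_degree_le_one (hmax : ∀ v, G.degree v ≤ 2) {a b d : V}
    (ha : G.degree a ≤ 1) (hb : G.degree b ≤ 1) (hd : G.degree d ≤ 1) (hab : a ≠ b) (had : a ≠ d)
    (hbd : b ≠ d) (h : G.Reachable a b) : ¬ G.Reachable a d := by
  classical
  intro h'
  have hsub : {a, b, d} ⊆ {v ∈ (G.connectedComponentMk a).supp.toFinset | G.degree v ≤ 1} := by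
    intro v hv
    simp only [mem_insert, mem_singleton] at hv
    simp only [mem_filter, Set.mem_toFinset, ConnectedComponent.mem_supp_iff,
      ConnectedComponent.eq]
    rcases hv with rfl | rfl | rfl
    exacts [⟨Reachable.refl _, ha⟩, ⟨h.symm, hb⟩, ⟨h'.symm, hd⟩]
  have := card_le_card hsub
  rw [card_eq_three.2 ⟨a, b, d, hab, had, hbd, rfl⟩] at this
  have := (G.connectedComponentMk a).card_filter_degree_le_one_le_two hmax
  omega

lemma IsAcyclic.exists_degree_le_one [Nonempty V] (hG : G.IsAcyclic) :
    ∃ v, G.degree v ≤ 1 := by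
  classical
  obtain ⟨v⟩ := ‹Nonempty V›
  set K := G.connectedComponentMk v
  rcases subsingleton_or_nontrivial K with hK | hK
  · refine ⟨v, ?_⟩
    rw [← K.degree_toSimpleGraph ⟨v, rfl⟩, degree_eq_zero_of_subsingleton]
    exact zero_le_one
  · obtain ⟨u, hu⟩ := (hG.isTree_connectedComponent K).exists_vert_degree_one_of_nontrivial
    exact ⟨u, by rw [← K.degree_toSimpleGraph, hu]⟩

lemma degree_deleteEdges_lt [DecidableEq V] {x y : V} (hxy : G.Adj x y) :
    (G.deleteEdges {s(x, y)}).degree x < G.degree x := by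
  rw [← card_neighborFinset_eq_degree, ← card_neighborFinset_eq_degree]
  refine card_lt_card ((ssubset_iff_of_subset fun w hw => ?_).2 ⟨y, ?_, ?_⟩) <;>
    simp_all

lemma card_edgeFinset_deleteEdges_lt [DecidableEq V] {x y : V} (hxy : G.Adj x y) :
    #(G.deleteEdges {s(x, y)}).edgeFinset < #G.edgeFinset :=
  card_lt_card ((ssubset_iff_of_subset (edgeFinset_mono (deleteEdges_le _))).2
    ⟨s(x, y), by simpa using hxy, by simp⟩)

lemma IsAcyclic.induce_degree_eq_of_le {G' : SimpleGraph V} [DecidableRel G'.Adj] {ℓ : ℕ}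
    (h : G' ≤ G) (hmax : ∀ v, G.degree v ≤ ℓ) (hac : (G.induce {v | G.degree v = ℓ}).IsAcyclic) :
    (G'.induce {v | G'.degree v = ℓ}).IsAcyclic :=
  hac.comap _ <| induceHom_injective (Hom.ofLE h)
    (fun v (hv : G'.degree v = ℓ) =>
      show G.degree v = ℓ from le_antisymm (hmax v) (hv.symm.trans_le (degree_le_of_le h)))
    Function.injective_id.injOn

lemma card_filter_eq_sum_connectedComponent [DecidableEq V] (H : SimpleGraph V) [DecidableRel H.Adj]
    (p : V → Prop) [DecidablePred p] :
    #{v | p v} = ∑ K : H.ConnectedComponent, #{v ∈ K.supp.toFinset | p v} := by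
  classical
  rw [card_eq_sum_card_fiberwise (f := H.connectedComponentMk) (t := univ) fun _ _ => mem_univ _]
  refine sum_congr rfl fun K _ => congrArg card ?_
  ext v
  simp [and_comm]

lemma not_isAcyclic_induce_of_forall_exists_adj {S : Set V} (hS : S.Nonempty)
    (h : ∀ v ∈ S, ∃ a ∈ S, ∃ b ∈ S, a ≠ b ∧ G.Adj v a ∧ G.Adj v b) :
    ¬ (G.induce S).IsAcyclic := by
  classical
  intro hac
  have : Nonempty S := hS.to_subtype
  obtain ⟨⟨v, hv⟩, hdeg⟩ := hac.exists_degree_le_one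
  obtain ⟨a, ha, b, hb, hab, hva, hvb⟩ := h v hv
  have : 1 < (G.induce S).degree ⟨v, hv⟩ := by
    rw [← card_neighborFinset_eq_degree, one_lt_card]
    exact ⟨⟨a, ha⟩, by simpa using hva, ⟨b, hb⟩, by simpa using hvb,
      fun h => hab (congrArg Subtype.val h)⟩
  omega

end Degree

structure IsEdgeColoring (G : SimpleGraph V) (ℓ : ℕ) (c : Sym2 V → ℕ) : Prop where
  lt : ∀ ⦃v w⦄, G.Adj v w → c s(v, w) < ℓ
  inj : ∀ ⦃v w₁ w₂⦄, G.Adj v w₁ → G.Adj v w₂ → c s(v, w₁) = c s(v, w₂) → w₁ = w₂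

def EdgeColorable (G : SimpleGraph V) (ℓ : ℕ) : Prop := ∃ c, G.IsEdgeColoring ℓ c

section Coloring

variable {ℓ : ℕ} {c : Sym2 V → ℕ}

lemma IsEdgeColoring.lt_of_mem_edgeSet (hc : G.IsEdgeColoring ℓ c) {e : Sym2 V}
    (he : e ∈ G.edgeSet) : c e < ℓ := by
  induction e using Sym2.ind with | _ v w => exact hc.lt he

lemma IsEdgeColoring.apply_ne (hc : G.IsEdgeColoring ℓ c) {e₁ e₂ : Sym2 V}
    (he₁ : e₁ ∈ G.edgeSet) (he₂ : e₂ ∈ G.edgeSet) (hne : e₁ ≠ e₂) {v : V}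
    (hv₁ : v ∈ e₁) (hv₂ : v ∈ e₂) : c e₁ ≠ c e₂ := by
  obtain ⟨w₁, rfl⟩ : ∃ w, s(v, w) = e₁ := ⟨_, Sym2.other_spec hv₁⟩
  obtain ⟨w₂, rfl⟩ : ∃ w, s(v, w) = e₂ := ⟨_, Sym2.other_spec hv₂⟩
  exact fun h => hne (congrArg _ (hc.inj he₁ he₂ h))

lemma IsEdgeColoring.mono {G' : SimpleGraph V} (hc : G.IsEdgeColoring ℓ c) (h : G' ≤ G) :
    G'.IsEdgeColoring ℓ c :=
  ⟨fun _ _ hvw => hc.lt (h hvw), fun _ _ _ h₁ h₂ => hc.inj (h h₁) (h h₂)⟩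

def colorClassGraph (G : SimpleGraph V) (c : Sym2 V → ℕ) (S : Finset ℕ) : SimpleGraph V where
  Adj v w := G.Adj v w ∧ c s(v, w) ∈ S
  symm := ⟨fun v w h => ⟨h.1.symm, Sym2.eq_swap (a := v) (b := w) ▸ h.2⟩⟩
  loopless := ⟨fun v h => G.loopless.irrefl v h.1⟩

@[simp]
lemma colorClassGraph_adj {S : Finset ℕ} {v w : V} :
    (G.colorClassGraph c S).Adj v w ↔ G.Adj v w ∧ c s(v, w) ∈ S :=
  Iff.rfl

lemma edgeSet_colorClassGraph (S : Finset ℕ) :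
    (G.colorClassGraph c S).edgeSet = {e ∈ G.edgeSet | c e ∈ S} := by
  ext e
  induction e using Sym2.ind with | _ v w => rfl

instance [DecidableRel G.Adj] (S : Finset ℕ) : DecidableRel (G.colorClassGraph c S).Adj :=
  fun v w => inferInstanceAs (Decidable (G.Adj v w ∧ c s(v, w) ∈ S))

variable [Fintype V] [DecidableRel G.Adj]

def colorsAt (G : SimpleGraph V) [DecidableRel G.Adj] (c : Sym2 V → ℕ) (v : V) : Finset ℕ :=
  (G.neighborFinset v).image fun w => c s(v, w)

lemma mem_colorsAt {v : V} {γ : ℕ} :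
    γ ∈ G.colorsAt c v ↔ ∃ w, G.Adj v w ∧ c s(v, w) = γ := by
  simp [colorsAt]

lemma colorsAt_mono {G' : SimpleGraph V} [DecidableRel G'.Adj] (h : G' ≤ G) (v : V) :
    G'.colorsAt c v ⊆ G.colorsAt c v := fun _ hγ =>
  let ⟨w, hw, hcol⟩ := mem_colorsAt.1 hγ
  mem_colorsAt.2 ⟨w, h hw, hcol⟩

lemma exists_notMem_colorsAt_of_degree_lt (c : Sym2 V → ℕ) {v : V} (hv : G.degree v < ℓ) :
    ∃ γ < ℓ, γ ∉ G.colorsAt c v := by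
  obtain ⟨γ, hγ, hγv⟩ := exists_mem_notMem_of_card_lt_card (s := G.colorsAt c v) (t := range ℓ)
    (by rw [card_range]; exact card_image_le.trans_lt hv)
  exact ⟨γ, mem_range.1 hγ, hγv⟩

lemma IsEdgeColoring.degree_colorClassGraph (hc : G.IsEdgeColoring ℓ c) (S : Finset ℕ) (v : V) :
    (G.colorClassGraph c S).degree v = #(S ∩ G.colorsAt c v) := by
  rw [← card_neighborFinset_eq_degree, ← card_image_of_injOn (f := fun w => c s(v, w))]
  · congr 1
    ext γ
    simp only [mem_image, mem_neighborFinset, colorClassGraph_adj, mem_inter, mem_colorsAt]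
    constructor
    · rintro ⟨w, ⟨hw, hS⟩, rfl⟩
      exact ⟨hS, w, hw, rfl⟩
    · rintro ⟨hS, w, hw, rfl⟩
      exact ⟨w, ⟨hw, hS⟩, rfl⟩
  · intro w₁ hw₁ w₂ hw₂ h
    simp only [coe_neighborFinset, mem_neighborSet, colorClassGraph_adj] at hw₁ hw₂
    exact hc.inj hw₁.1 hw₂.1 h

lemma IsEdgeColoring.degree_colorClassGraph_pair_le_two (hc : G.IsEdgeColoring ℓ c)
    (α β : ℕ) (v : V) : (G.colorClassGraph c {α, β}).degree v ≤ 2 := by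
  rw [hc.degree_colorClassGraph]
  exact (card_le_card inter_subset_left).trans card_le_two

lemma IsEdgeColoring.degree_colorClassGraph_pair_le_one (hc : G.IsEdgeColoring ℓ c) {α β : ℕ}
    {v : V} (h : α ∉ G.colorsAt c v ∨ β ∉ G.colorsAt c v) :
    (G.colorClassGraph c {α, β}).degree v ≤ 1 := by
  rw [hc.degree_colorClassGraph, card_le_one]
  simp only [mem_inter, mem_insert, mem_singleton]
  rintro a ⟨rfl | rfl, ha⟩ b ⟨rfl | rfl, hb⟩ <;> tauto

lemma IsEdgeColoring.two_mul_ncard_colorClass (hc : G.IsEdgeColoring ℓ c) (γ : ℕ) :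
    2 * {e ∈ G.edgeSet | c e = γ}.ncard = #{v | γ ∈ G.colorsAt c v} := by
  have h := (G.colorClassGraph c {γ}).sum_degrees_eq_twice_card_edges
  simp only [hc.degree_colorClassGraph, singleton_inter, apply_ite card, card_singleton,
    card_empty, sum_boole, Nat.cast_id] at h
  rw [h, ← Set.ncard_coe_finset, coe_edgeFinset, edgeSet_colorClassGraph]
  simp only [mem_singleton]

end Coloring

section Kempe

variable {c : Sym2 V → ℕ} {α β : ℕ} {K : (G.colorClassGraph c {α, β}).ConnectedComponent}

open Classical in
/-- Only one endpoint is tested: an edge of colour `α` or `β` at a vertex of `K` lies in `K`,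
and the swap fixes every other colour. -/
noncomputable def kempeSwap (G : SimpleGraph V) (c : Sym2 V → ℕ) (α β : ℕ)
    (K : (G.colorClassGraph c {α, β}).ConnectedComponent) (e : Sym2 V) : ℕ :=
  if ∃ v ∈ e, v ∈ K then Equiv.swap α β (c e) else c e

lemma kempeSwap_of_mem {v : V} (hv : v ∈ K) (w : V) :
    G.kempeSwap c α β K s(v, w) = Equiv.swap α β (c s(v, w)) :=
  if_pos ⟨v, Sym2.mem_mk_left v w, hv⟩

lemma kempeSwap_of_notMem {v w : V} (hv : v ∉ K) (hvw : G.Adj v w) :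
    G.kempeSwap c α β K s(v, w) = c s(v, w) := by
  unfold kempeSwap
  split_ifs with h
  · obtain ⟨u, hu, huK⟩ := h
    rcases Sym2.mem_iff.1 hu with rfl | rfl
    · exact absurd huK hv
    · refine Equiv.swap_apply_of_ne_of_ne ?_ ?_ <;> intro hcol <;> apply hv <;>
        exact K.mem_supp_of_adj_mem_supp huK ⟨hvw.symm, by simp [Sym2.eq_swap, hcol]⟩
  · rfl

lemma IsEdgeColoring.kempeSwap {ℓ : ℕ} (hc : G.IsEdgeColoring ℓ c) (hα : α < ℓ) (hβ : β < ℓ) :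
    G.IsEdgeColoring ℓ (G.kempeSwap c α β K) where
  lt v w h := by
    by_cases hv : v ∈ K
    · have := hc.lt h
      rw [kempeSwap_of_mem hv, Equiv.swap_apply_def]
      split_ifs <;> assumption
    · rw [kempeSwap_of_notMem hv h]
      exact hc.lt h
  inj v w₁ w₂ h₁ h₂ h := by
    by_cases hv : v ∈ K
    · rw [kempeSwap_of_mem hv, kempeSwap_of_mem hv] at h
      exact hc.inj h₁ h₂ ((Equiv.swap α β).injective h)
    · rw [kempeSwap_of_notMem hv h₁, kempeSwap_of_notMem hv h₂] at h
      exact hc.inj h₁ h₂ h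

variable [Fintype V] [DecidableRel G.Adj]

lemma mem_colorsAt_kempeSwap_of_mem {v : V} (hv : v ∈ K) {γ : ℕ} :
    γ ∈ G.colorsAt (G.kempeSwap c α β K) v ↔ Equiv.swap α β γ ∈ G.colorsAt c v := by
  simp only [mem_colorsAt, kempeSwap_of_mem hv, Equiv.swap_apply_eq_iff]

lemma colorsAt_kempeSwap_of_notMem {v : V} (hv : v ∉ K) :
    G.colorsAt (G.kempeSwap c α β K) v = G.colorsAt c v :=
  image_congr fun _ hw => kempeSwap_of_notMem hv ((mem_neighborFinset _ _ _).1 hw)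

end Kempe

section Fan

variable [Fintype V] [DecidableEq V] [DecidableRel G.Adj] {ℓ : ℕ} {c : Sym2 V → ℕ} {x y : V}

lemma IsEdgeColoring.update_of_notMem (hc : (G.deleteEdges {s(x, y)}).IsEdgeColoring ℓ c)
    {γ : ℕ} (hγ : γ < ℓ) (hx : γ ∉ (G.deleteEdges {s(x, y)}).colorsAt c x)
    (hy : γ ∉ (G.deleteEdges {s(x, y)}).colorsAt c y) :
    G.IsEdgeColoring ℓ (Function.update c s(x, y) γ) := by
  have hfree : ∀ ⦃v w w'⦄, s(v, w) = s(x, y) → (G.deleteEdges {s(x, y)}).Adj v w' →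
      c s(v, w') ≠ γ := by
    intro v w w' he hw' hcol
    rcases Sym2.mem_iff.1 (he ▸ Sym2.mem_mk_left v w) with rfl | rfl
    exacts [hx (mem_colorsAt.2 ⟨w', hw', hcol⟩), hy (mem_colorsAt.2 ⟨w', hw', hcol⟩)]
  refine ⟨fun v w hvw => ?_, fun v w₁ w₂ h₁ h₂ h => ?_⟩
  · by_cases he : s(v, w) = s(x, y)
    · simpa [he] using hγ
    · simpa [he] using hc.lt (deleteEdges_adj.2 ⟨hvw, he⟩)
  · by_cases he₁ : s(v, w₁) = s(x, y) <;> by_cases he₂ : s(v, w₂) = s(x, y) <;>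
      simp only [Function.update_apply, he₁, he₂, if_true, if_false] at h
    · exact Sym2.congr_right.1 (he₁.trans he₂.symm)
    · exact absurd h.symm (hfree he₁ (deleteEdges_adj.2 ⟨h₂, he₂⟩))
    · exact absurd h (hfree he₂ (deleteEdges_adj.2 ⟨h₁, he₁⟩))
    · exact hc.inj (deleteEdges_adj.2 ⟨h₁, he₁⟩) (deleteEdges_adj.2 ⟨h₂, he₂⟩) h

lemma IsEdgeColoring.rotate (hc : (G.deleteEdges {s(x, y)}).IsEdgeColoring ℓ c) {z : V}
    (hz : (G.deleteEdges {s(x, y)}).Adj x z)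
    (hy : c s(x, z) ∉ (G.deleteEdges {s(x, y)}).colorsAt c y) :
    (G.deleteEdges {s(x, z)}).IsEdgeColoring ℓ (Function.update c s(x, y) (c s(x, z))) := by
  have hle : (G.deleteEdges {s(x, z)}).deleteEdges {s(x, y)} ≤ G.deleteEdges {s(x, y)} :=
    fun v w h => by simp_all
  refine (hc.mono hle).update_of_notMem (hc.lt hz) (fun h => ?_)
    fun h => hy (colorsAt_mono hle y h)
  obtain ⟨w, hw, hcol⟩ := mem_colorsAt.1 h
  have hwz := hc.inj (hle hw) hz hcol
  subst hwz
  simp at hw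

lemma notMem_colorsAt_rotate {z : V} (hz : (G.deleteEdges {s(x, y)}).Adj x z) {v : V}
    (hv : v ≠ y) {γ : ℕ} (h : γ ∉ (G.deleteEdges {s(x, y)}).colorsAt c v) :
    γ ∉ (G.deleteEdges {s(x, z)}).colorsAt (Function.update c s(x, y) (c s(x, z))) v := by
  rw [mem_colorsAt]
  rintro ⟨w, hw, hcol⟩
  rw [deleteEdges_adj] at hw
  by_cases he : s(v, w) = s(x, y)
  · obtain ⟨rfl, rfl⟩ : v = x ∧ w = y := by
      rcases Sym2.eq_iff.1 he with h | ⟨rfl, -⟩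
      exacts [h, absurd rfl hv]
    rw [Function.update_self] at hcol
    exact h (mem_colorsAt.2 ⟨z, hz, hcol⟩)
  · rw [Function.update_of_ne he] at hcol
    exact h (mem_colorsAt.2 ⟨w, deleteEdges_adj.2 ⟨hw.1, he⟩, hcol⟩)

structure IsFan (G : SimpleGraph V) [DecidableRel G.Adj] (c : Sym2 V → ℕ) (x y : V)
    (z : ℕ → V) (n : ℕ) : Prop where
  zero : z 0 = y
  injOn : Set.InjOn z (Set.Iic n)
  adj : ∀ i ≤ n, G.Adj x (z i)
  notMem_colorsAt : ∀ i < n, c s(x, z (i + 1)) ∉ (G.deleteEdges {s(x, y)}).colorsAt c (z i)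

variable {z : ℕ → V} {n : ℕ}

lemma IsFan.ne_zero (hfan : G.IsFan c x y z n) {i : ℕ} (hi : 0 < i) (hin : i ≤ n) : z i ≠ y :=
  fun h => hi.ne' (hfan.injOn hin (Nat.zero_le n) (h.trans hfan.zero.symm))

lemma IsFan.adj_deleteEdges (hfan : G.IsFan c x y z n) {i : ℕ} (hi : 0 < i) (hin : i ≤ n) :
    (G.deleteEdges {s(x, y)}).Adj x (z i) :=
  deleteEdges_adj.2 ⟨hfan.adj i hin, fun h => hfan.ne_zero hi hin (Sym2.congr_right.1 h)⟩

lemma IsFan.of_le (hfan : G.IsFan c x y z n) {m : ℕ} (hm : m ≤ n) : G.IsFan c x y z m :=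
  ⟨hfan.zero, hfan.injOn.mono (Set.Iic_subset_Iic.2 hm), fun i hi => hfan.adj i (hi.trans hm),
    fun i hi => hfan.notMem_colorsAt i (hi.trans_le hm)⟩

lemma IsFan.tail (hfan : G.IsFan c x y z (n + 1)) :
    G.IsFan (Function.update c s(x, y) (c s(x, z 1))) x (z 1) (fun i => z (i + 1)) n where
  zero := rfl
  injOn i hi j hj h := by
    simpa using hfan.injOn (Set.mem_Iic.2 (Nat.succ_le_succ hi))
      (Set.mem_Iic.2 (Nat.succ_le_succ hj)) h
  adj i hi := hfan.adj (i + 1) (by omega)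
  notMem_colorsAt i hi := by
    rw [Function.update_of_ne fun h => hfan.ne_zero (i := i + 2) (by omega) (by omega)
      (Sym2.congr_right.1 h)]
    exact notMem_colorsAt_rotate (hfan.adj_deleteEdges one_pos (by omega))
      (hfan.ne_zero (by omega) (by omega)) (hfan.notMem_colorsAt (i + 1) (by omega))

lemma IsFan.edgeColorable (hfan : G.IsFan c x y z n)
    (hc : (G.deleteEdges {s(x, y)}).IsEdgeColoring ℓ c) {γ : ℕ} (hγ : γ < ℓ)
    (hx : γ ∉ (G.deleteEdges {s(x, y)}).colorsAt c x)
    (hz : γ ∉ (G.deleteEdges {s(x, y)}).colorsAt c (z n)) : G.EdgeColorable ℓ := by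
  induction n generalizing c y z with
  | zero => exact ⟨_, hc.update_of_notMem hγ hx (hfan.zero ▸ hz)⟩
  | succ n ih =>
    have hz₁ := hfan.adj_deleteEdges one_pos (by omega)
    have hxy : x ≠ y := fun h => (hfan.adj 0 (Nat.zero_le _)).ne (h.trans hfan.zero.symm)
    have hy : c s(x, z 1) ∉ (G.deleteEdges {s(x, y)}).colorsAt c y :=
      hfan.zero ▸ hfan.notMem_colorsAt 0 (Nat.succ_pos n)
    exact ih hfan.tail (hc.rotate hz₁ hy)
      (notMem_colorsAt_rotate hz₁ hxy hx)
      (notMem_colorsAt_rotate hz₁ (hfan.ne_zero (by omega) le_rfl) hz)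

lemma IsFan.snoc (hfan : G.IsFan c x y z n) {w : V} (hw : G.Adj x w) (hwz : ∀ i ≤ n, z i ≠ w)
    (hmiss : c s(x, w) ∉ (G.deleteEdges {s(x, y)}).colorsAt c (z n)) :
    G.IsFan c x y (Function.update z (n + 1) w) (n + 1) where
  zero := by rw [Function.update_of_ne (Nat.succ_ne_zero n).symm, hfan.zero]
  injOn i hi j hj h := by
    simp only [Set.mem_Iic] at hi hj
    simp only [Function.update_apply] at h
    split_ifs at h with hi' hj'
    · rw [hi', hj']
    · exact absurd h.symm (hwz j (by omega))
    · exact absurd h (hwz i (by omega))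
    · exact hfan.injOn (Set.mem_Iic.2 (by omega)) (Set.mem_Iic.2 (by omega)) h
  adj i hi := by
    rw [Function.update_apply]
    split_ifs
    exacts [hw, hfan.adj i (by omega)]
  notMem_colorsAt i hi := by
    rw [Function.update_of_ne (by omega : i ≠ n + 1), Function.update_apply]
    split_ifs with h
    · rw [(by omega : i = n)]
      exact hmiss
    · exact hfan.notMem_colorsAt i (by omega)

lemma exists_isFan_maximal (hxy : G.Adj x y) (c : Sym2 V → ℕ) :
    ∃ z n, G.IsFan c x y z n ∧ ∀ z' m, G.IsFan c x y z' m → m ≤ n := by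
  classical
  have hbound : ∀ z' m, G.IsFan c x y z' m → m ≤ Fintype.card V := fun z' m hfan => by
    have := card_le_card_of_injOn z' (s := range (m + 1)) (t := univ) (fun _ _ => mem_univ _)
      fun i hi j hj h => hfan.injOn (by simpa [Nat.lt_succ_iff] using hi)
        (by simpa [Nat.lt_succ_iff] using hj) h
    rw [card_range, card_univ] at this
    omega
  have h₀ : G.IsFan c x y (fun _ => y) 0 :=
    ⟨rfl, fun _ _ _ _ _ => by simp_all, fun _ _ => hxy, fun _ hi => absurd hi (Nat.not_lt_zero _)⟩
  obtain ⟨z, hz⟩ := Nat.findGreatest_spec (P := fun m => ∃ z, G.IsFan c x y z m) (Nat.zero_le _)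
    ⟨_, h₀⟩
  exact ⟨z, _, hz, fun z' m hfan => Nat.le_findGreatest (hbound z' m hfan) ⟨z', hfan⟩⟩

lemma IsFan.exists_eq_of_maximal (hfan : G.IsFan c x y z n)
    (hmax : ∀ z' m, G.IsFan c x y z' m → m ≤ n) {β : ℕ}
    (hzβ : β ∉ (G.deleteEdges {s(x, y)}).colorsAt c (z n))
    (hxβ : β ∈ (G.deleteEdges {s(x, y)}).colorsAt c x) :
    ∃ j, 0 < j ∧ j < n ∧ c s(x, z j) = β := by
  obtain ⟨w, hw, hwβ⟩ := mem_colorsAt.1 hxβ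
  by_cases hwfan : ∃ j ≤ n, z j = w
  · obtain ⟨j, hjn, rfl⟩ := hwfan
    refine ⟨j, Nat.pos_of_ne_zero ?_, lt_of_le_of_ne hjn ?_, hwβ⟩
    · rintro rfl
      simp [hfan.zero] at hw
    · rintro rfl
      exact hzβ (mem_colorsAt.2 ⟨x, hw.symm, by rw [Sym2.eq_swap, hwβ]⟩)
  · push Not at hwfan
    have := hmax _ _ (hfan.snoc (deleteEdges_adj.1 hw).1 hwfan (hwβ ▸ hzβ))
    omega

section KempeFan

variable {α β : ℕ}
  {K : ((G.deleteEdges {s(x, y)}).colorClassGraph c {α, β}).ConnectedComponent}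

lemma IsFan.kempeSwap (hfan : G.IsFan c x y z n) (hxK : x ∉ K)
    (hK : ∀ i < n, z i ∈ K → c s(x, z (i + 1)) ≠ α ∧ c s(x, z (i + 1)) ≠ β) :
    G.IsFan ((G.deleteEdges {s(x, y)}).kempeSwap c α β K) x y z n where
  zero := hfan.zero
  injOn := hfan.injOn
  adj := hfan.adj
  notMem_colorsAt i hi := by
    rw [kempeSwap_of_notMem hxK (hfan.adj_deleteEdges i.succ_pos hi)]
    by_cases hzK : z i ∈ K
    · rw [mem_colorsAt_kempeSwap_of_mem hzK,
        Equiv.swap_apply_of_ne_of_ne (hK i hi hzK).1 (hK i hi hzK).2]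
      exact hfan.notMem_colorsAt i hi
    · rw [colorsAt_kempeSwap_of_notMem hzK]
      exact hfan.notMem_colorsAt i hi

lemma IsFan.edgeColorable_of_kempeSwap (hfan : G.IsFan c x y z n)
    (hc : (G.deleteEdges {s(x, y)}).IsEdgeColoring ℓ c) (hα : α < ℓ) (hβ : β < ℓ)
    (hxα : α ∉ (G.deleteEdges {s(x, y)}).colorsAt c x)
    (hzβ : β ∉ (G.deleteEdges {s(x, y)}).colorsAt c (z n)) (hxK : x ∉ K) (hzK : z n ∈ K)
    (hK : ∀ i < n, z i ∈ K → c s(x, z (i + 1)) ≠ α ∧ c s(x, z (i + 1)) ≠ β) :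
    G.EdgeColorable ℓ := by
  refine (hfan.kempeSwap hxK hK).edgeColorable (hc.kempeSwap hα hβ) hα ?_ ?_
  · rwa [colorsAt_kempeSwap_of_notMem hxK]
  · rwa [mem_colorsAt_kempeSwap_of_mem hzK, Equiv.swap_apply_left]

/-- At most two of `x`, `z (j - 1)`, `z n` lie in one component of the `α`/`β`-subgraph, so a
swap away from `x` makes `α` missing at `z (j - 1)` or at `z n`. -/
lemma IsFan.edgeColorable_of_apply_eq (hfan : G.IsFan c x y z n)
    (hc : (G.deleteEdges {s(x, y)}).IsEdgeColoring ℓ c) (hα : α < ℓ) (hβ : β < ℓ)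
    (hxα : α ∉ (G.deleteEdges {s(x, y)}).colorsAt c x)
    (hzβ : β ∉ (G.deleteEdges {s(x, y)}).colorsAt c (z n)) {j : ℕ} (hj : 0 < j) (hjn : j < n)
    (hxzj : c s(x, z j) = β) : G.EdgeColorable ℓ := by
  set H := (G.deleteEdges {s(x, y)}).colorClassGraph c {α, β}
  have huβ : β ∉ (G.deleteEdges {s(x, y)}).colorsAt c (z (j - 1)) := by
    have := hfan.notMem_colorsAt (j - 1) (by omega)
    rwa [Nat.sub_add_cancel hj, hxzj] at this
  have hcol : ∀ i < n, i + 1 ≠ j → c s(x, z (i + 1)) ≠ α ∧ c s(x, z (i + 1)) ≠ β := by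
    intro i hi hij
    have hzi := hfan.adj_deleteEdges i.succ_pos hi
    refine ⟨fun h => hxα (mem_colorsAt.2 ⟨_, hzi, h⟩), fun h => hij ?_⟩
    refine hfan.injOn (Set.mem_Iic.2 hi) (Set.mem_Iic.2 hjn.le) ?_
    exact hc.inj hzi (hfan.adj_deleteEdges hj hjn.le) (h.trans hxzj.symm)
  have hzx : ∀ i ≤ n, x ≠ z i := fun i hi => (hfan.adj i hi).ne
  have hnot : H.Reachable x (z (j - 1)) → ¬ H.Reachable x (z n) :=
    Reachable.not_reachable_of_degree_le_one (hc.degree_colorClassGraph_pair_le_two α β)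
      (hc.degree_colorClassGraph_pair_le_one (.inl hxα))
      (hc.degree_colorClassGraph_pair_le_one (.inr huβ))
      (hc.degree_colorClassGraph_pair_le_one (.inr hzβ)) (hzx _ (by omega)) (hzx n le_rfl)
      fun h => by have := hfan.injOn (Set.mem_Iic.2 (by omega)) (Set.mem_Iic.2 le_rfl) h; omega
  by_cases hu : H.Reachable x (z (j - 1))
  · refine hfan.edgeColorable_of_kempeSwap hc hα hβ hxα hzβ
      (K := H.connectedComponentMk (z n)) (fun h => hnot hu (ConnectedComponent.exact h)) rfl
      fun i hi hiK => hcol i hi fun hij => hnot hu ?_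
    rw [(by omega : i = j - 1)] at hiK
    exact hu.trans (ConnectedComponent.exact hiK)
  · exact (hfan.of_le (by omega : j - 1 ≤ n)).edgeColorable_of_kempeSwap hc hα hβ hxα huβ
      (K := H.connectedComponentMk (z (j - 1))) (fun h => hu (ConnectedComponent.exact h)) rfl
      fun i hi _ => hcol i (by omega) (by omega)

end KempeFan

theorem exists_adj_degree_eq_of_not_edgeColorable (hmax : ∀ v, G.degree v ≤ ℓ)
    (hG : ¬ G.EdgeColorable ℓ) (hxy : G.Adj x y)
    (hc : (G.deleteEdges {s(x, y)}).IsEdgeColoring ℓ c) :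
    ∃ z, G.Adj x z ∧ z ≠ y ∧ G.degree z = ℓ := by
  by_contra! hsmall
  obtain ⟨α, hα, hxα⟩ :=
    exists_notMem_colorsAt_of_degree_lt c ((degree_deleteEdges_lt hxy).trans_le (hmax x))
  obtain ⟨z, n, hfan, hmaxfan⟩ := exists_isFan_maximal hxy c
  have hzn : (G.deleteEdges {s(x, y)}).degree (z n) < ℓ := by
    by_cases hzy : z n = y
    · rw [hzy, Sym2.eq_swap]
      exact (degree_deleteEdges_lt hxy.symm).trans_le (hmax y)
    · exact (degree_le_of_le (deleteEdges_le _)).trans_lt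
        ((hmax _).lt_of_ne (hsmall _ (hfan.adj n le_rfl) hzy))
  obtain ⟨β, hβ, hzβ⟩ := exists_notMem_colorsAt_of_degree_lt c hzn
  have hxβ : β ∈ (G.deleteEdges {s(x, y)}).colorsAt c x := by
    by_contra h
    exact hG (hfan.edgeColorable hc hβ h hzβ)
  obtain ⟨j, hj, hjn, hxzj⟩ := hfan.exists_eq_of_maximal hmaxfan hzβ hxβ
  exact hG (hfan.edgeColorable_of_apply_eq hc hα hβ hxα hzβ hj hjn hxzj)

end Fan

section Fournier

variable [Fintype V] [DecidableRel G.Adj] {ℓ : ℕ}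

theorem edgeColorable_of_isAcyclic_induce_degree_eq (hmax : ∀ v, G.degree v ≤ ℓ)
    (hac : (G.induce {v | G.degree v = ℓ}).IsAcyclic) : G.EdgeColorable ℓ := by
  classical
  induction hn : #G.edgeFinset using Nat.strong_induction_on generalizing G with
  | _ n ih =>
  by_contra hG
  have hcrit : ∀ ⦃x y⦄, G.Adj x y → ∃ z, G.Adj x z ∧ z ≠ y ∧ G.degree z = ℓ := by
    intro x y hxy
    obtain ⟨c, hc⟩ := ih _ (hn ▸ card_edgeFinset_deleteEdges_lt hxy) (G := G.deleteEdges {s(x, y)})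
      (fun v => (degree_le_of_le (deleteEdges_le _)).trans (hmax v))
      (hac.induce_degree_eq_of_le (deleteEdges_le _) hmax) rfl
    exact exists_adj_degree_eq_of_not_edgeColorable hmax hG hxy hc
  obtain ⟨x, y, hxy⟩ : ∃ x y, G.Adj x y := by
    by_contra! h
    exact hG ⟨fun _ => 0, fun v w hvw => absurd hvw (h v w), fun v w _ hvw => absurd hvw (h v w)⟩
  obtain ⟨z, hxz, -, hz⟩ := hcrit hxy
  refine not_isAcyclic_induce_of_forall_exists_adj ⟨z, hz⟩ (fun v (hv : G.degree v = ℓ) => ?_) hac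
  obtain ⟨w, hw⟩ := (G.degree_pos_iff_exists_adj v).1 <| by
    rw [hv, ← hz]
    exact (G.degree_pos_iff_exists_adj z).2 ⟨x, hxz.symm⟩
  obtain ⟨z₁, hz₁, -, hz₁ℓ⟩ := hcrit hw
  obtain ⟨z₂, hz₂, hz₂₁, hz₂ℓ⟩ := hcrit hz₁
  exact ⟨z₁, hz₁ℓ, z₂, hz₂ℓ, hz₂₁.symm, hz₁, hz₂⟩

end Fournier

section Balance

variable [Fintype V] [DecidableEq V] [DecidableRel G.Adj] {ℓ : ℕ} {c : Sym2 V → ℕ}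

/-- `#{v | γ ∈ G.colorsAt c v}` is twice the size of the colour class `γ`
(`IsEdgeColoring.two_mul_ncard_colorClass`). -/
def colorPotential (G : SimpleGraph V) [DecidableRel G.Adj] (ℓ : ℕ) (c : Sym2 V → ℕ) : ℕ :=
  ∑ γ ∈ range ℓ, #{v | γ ∈ G.colorsAt c v} ^ 2

lemma IsEdgeColoring.card_mem_colorsAt_le (hc : G.IsEdgeColoring ℓ c) {α β : ℕ}
    (K : (G.colorClassGraph c {α, β}).ConnectedComponent) :
    #{v ∈ K.supp.toFinset | α ∈ G.colorsAt c v} ≤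
      #{v ∈ K.supp.toFinset | β ∈ G.colorsAt c v} + 2 := by
  have hdeg : ∀ v, (G.colorClassGraph c {α, β}).degree v ≤
      (if α ∈ G.colorsAt c v then 1 else 0) + (if β ∈ G.colorsAt c v then 1 else 0) := by
    intro v
    rw [hc.degree_colorClassGraph, insert_eq, union_inter_distrib_right, singleton_inter,
      singleton_inter]
    refine (card_union_le _ _).trans ?_
    split_ifs <;> simp
  have hsum := sum_le_sum fun v (_ : v ∈ K.supp.toFinset) => hdeg v
  rw [sum_add_distrib, ← card_filter, ← card_filter] at hsum
  have := K.two_mul_card_supp_le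
  have := card_filter_le K.supp.toFinset fun v => α ∈ G.colorsAt c v
  omega

lemma card_mem_colorsAt_kempeSwap {α β : ℕ}
    (K : (G.colorClassGraph c {α, β}).ConnectedComponent) (γ : ℕ) :
    #{v | γ ∈ G.colorsAt (G.kempeSwap c α β K) v} + #{v ∈ K.supp.toFinset | γ ∈ G.colorsAt c v} =
      #{v | γ ∈ G.colorsAt c v} +
        #{v ∈ K.supp.toFinset | Equiv.swap α β γ ∈ G.colorsAt c v} := by
  have hsplit (p : V → Prop) [DecidablePred p] :
      #{v | p v} = #{v ∈ K.supp.toFinset | p v} + #{v ∈ K.supp.toFinsetᶜ | p v} := by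
    simp only [card_filter]
    exact (sum_add_sum_compl _ _).symm
  have hin : {v ∈ K.supp.toFinset | γ ∈ G.colorsAt (G.kempeSwap c α β K) v} =
      {v ∈ K.supp.toFinset | Equiv.swap α β γ ∈ G.colorsAt c v} :=
    filter_congr fun v hv => mem_colorsAt_kempeSwap_of_mem ((Set.mem_toFinset (s := K.supp)).1 hv)
  have hout : {v ∈ K.supp.toFinsetᶜ | γ ∈ G.colorsAt (G.kempeSwap c α β K) v} =
      {v ∈ K.supp.toFinsetᶜ | γ ∈ G.colorsAt c v} :=
    filter_congr fun v hv => by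
      rw [colorsAt_kempeSwap_of_notMem fun h => mem_compl.1 hv (Set.mem_toFinset.2 h)]
  rw [hsplit, hsplit fun v => γ ∈ G.colorsAt c v, hin, hout]
  omega

lemma IsEdgeColoring.exists_colorPotential_kempeSwap_lt (hc : G.IsEdgeColoring ℓ c) {α β : ℕ}
    (hα : α < ℓ) (hβ : β < ℓ)
    (hgap : #{v | β ∈ G.colorsAt c v} + 4 ≤ #{v | α ∈ G.colorsAt c v}) :
    ∃ K, G.colorPotential ℓ (G.kempeSwap c α β K) < G.colorPotential ℓ c := by
  have hαβ : α ≠ β := by rintro rfl; omega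
  obtain ⟨K, -, hK⟩ := exists_lt_of_sum_lt <| show
      ∑ K : (G.colorClassGraph c {α, β}).ConnectedComponent,
        #{v ∈ K.supp.toFinset | β ∈ G.colorsAt c v} <
      ∑ K : (G.colorClassGraph c {α, β}).ConnectedComponent,
        #{v ∈ K.supp.toFinset | α ∈ G.colorsAt c v} by
    rw [← card_filter_eq_sum_connectedComponent, ← card_filter_eq_sum_connectedComponent]
    omega
  refine ⟨K, sum_lt_sum_of_eq_off_pair (mem_range.2 hα) (mem_range.2 hβ) hαβ
    (fun γ _ hγα hγβ => ?_) ?_⟩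
  · have := card_mem_colorsAt_kempeSwap K γ
    rw [Equiv.swap_apply_of_ne_of_ne hγα hγβ] at this
    rw [Nat.add_right_cancel this]
  · have hα' := card_mem_colorsAt_kempeSwap K α
    have hβ' := card_mem_colorsAt_kempeSwap K β
    rw [Equiv.swap_apply_left] at hα'
    rw [Equiv.swap_apply_right] at hβ'
    have := hc.card_mem_colorsAt_le K
    nlinarith

end Balance

theorem EdgeColorable.exists_balanced [Fintype V] {ℓ : ℕ} (h : G.EdgeColorable ℓ) :
    ∃ c, G.IsEdgeColoring ℓ c ∧ ∀ i < ℓ, ∀ j < ℓ,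
      {e ∈ G.edgeSet | c e = i}.ncard ≤ {e ∈ G.edgeSet | c e = j}.ncard + 1 := by
  classical
  obtain ⟨c, hc, hmin⟩ := (measure (G.colorPotential ℓ)).wf.has_min {c | G.IsEdgeColoring ℓ c} h
  refine ⟨c, hc, fun i hi j hj => ?_⟩
  by_contra! hgt
  have := hc.two_mul_ncard_colorClass i
  have := hc.two_mul_ncard_colorClass j
  obtain ⟨K, hK⟩ := hc.exists_colorPotential_kempeSwap_lt hi hj (by omega)
  exact hmin _ (hc.kempeSwap hi hj) hK

end SimpleGraph

open SimpleGraph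

theorem stmt10 {V : Type*} [Fintype V] (G : SimpleGraph V) (ℓ : ℕ)
    (hmax : ∀ v, (G.neighborSet v).ncard ≤ ℓ)
    (hacyclic : (G.induce {v | (G.neighborSet v).ncard = ℓ}).IsAcyclic) :
    ∃ f : Sym2 V → ℕ,
      (∀ e ∈ G.edgeSet, f e < ℓ) ∧
      (∀ e₁ ∈ G.edgeSet, ∀ e₂ ∈ G.edgeSet,
        e₁ ≠ e₂ → (∃ v, v ∈ e₁ ∧ v ∈ e₂) → f e₁ ≠ f e₂) ∧
      ∀ i < ℓ, ∀ j < ℓ,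
        {e ∈ G.edgeSet | f e = i}.ncard ≤ {e ∈ G.edgeSet | f e = j}.ncard + 1 := by
  classical
  simp only [ncard_neighborSet_eq_degree] at hmax
  rw [show {v | (G.neighborSet v).ncard = ℓ} = {v | G.degree v = ℓ} by
    simp only [ncard_neighborSet_eq_degree]] at hacyclic
  obtain ⟨c, hc, hbal⟩ :=
    (edgeColorable_of_isAcyclic_induce_degree_eq hmax hacyclic).exists_balanced
  exact ⟨c, fun _ he => hc.lt_of_mem_edgeSet he,
    fun _ he₁ _ he₂ hne ⟨_, hv₁, hv₂⟩ => hc.apply_ne he₁ he₂ hne hv₁ hv₂, hbal⟩
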